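/- Along any solution of the continuous inertial mirror descent system with μ(t) = t (that is, ζ'(t) = −∇f(x(t)) with ζ(0) = 0 and t·x'(t) + x(t) = ∇W(ζ(t)) for all t ≥ 0, with x(0) = ∇W(0)), one has for every t > 0 the upper bound f(x(t)) − f* ≤ V(x*)·t^{−1}, where V(x*) = sup_ζ (⟨ζ, x*⟩ − W(ζ)). -/

import Mathlib

/-!
Along the trajectory, the Lyapunov function
`E(s) = s (f(x s) - f x*) + W(ζ s) - ⟪ζ s, x*⟫` is nonincreasing: substituting `ζ' = -∇f(x)` and
`s x' + x = ∇W(ζ)` collapses `E'(s)` to `f(x s) - f x* + ⟪∇f(x s), x* - x s⟫`, which is `≤ 0` by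
convexity of `f`. Since `E(0) = 0`, we get `t (f(x t) - f x*) ≤ ⟪ζ t, x*⟫ - W(ζ t) ≤ V(x*)`.
-/

open RealInnerProductSpace Set

theorem ConvexOn.add_fderiv_sub_le {E : Type*} [NormedAddCommGroup E] [NormedSpace ℝ E]
    {f : E → ℝ} {f' : StrongDual ℝ E} {s : Set E} {a b : E} (hf : ConvexOn ℝ s f)
    (ha : a ∈ s) (hb : b ∈ s) (hf' : HasFDerivAt f f' a) :
    f a + f' (b - a) ≤ f b := by
  set L : ℝ →ᵃ[ℝ] E := AffineMap.lineMap a b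
  have hL0 : L 0 = a := AffineMap.lineMap_apply_zero a b
  have hL1 : L 1 = b := AffineMap.lineMap_apply_one a b
  have hline : ConvexOn ℝ (L ⁻¹' s) (f ∘ L) := hf.comp_affineMap L
  have hderiv : HasDerivAt (f ∘ L) (f' (b - a)) 0 := by
    rw [← hL0] at hf'
    exact hf'.comp_hasDerivAt 0 AffineMap.hasDerivAt_lineMap
  have hslope := hline.le_slope_of_hasDerivAt (by simpa [hL0]) (by simpa [hL1]) zero_lt_one hderiv
  rw [slope_def_field] at hslope
  simp only [Function.comp_apply, hL0, hL1, sub_zero, div_one] at hslope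
  linarith

section

variable {H : Type*} [NormedAddCommGroup H] [InnerProductSpace ℝ H]

variable (f W : H → ℝ) (ζ x : ℝ → H) (xstar : H)

def imdEnergy (s : ℝ) : ℝ :=
  s * (f (x s) - f xstar) + (W (ζ s) - ⟪ζ s, xstar⟫)

variable {f W ζ x xstar}

theorem imdEnergy_zero (hW0 : W 0 = 0) (hζ0 : ζ 0 = 0) : imdEnergy f W ζ x xstar 0 = 0 := by
  simp [imdEnergy, hW0, hζ0]

variable [CompleteSpace H]

theorem HasGradientAt.comp_hasDerivAt {f : H → ℝ} {g : H} {γ : ℝ → H} {v : H} {t : ℝ}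
    (hf : HasGradientAt f g (γ t)) (hγ : HasDerivAt γ v t) :
    HasDerivAt (fun s => f (γ s)) ⟪g, v⟫ t := by
  have := (hasGradientAt_iff_hasFDerivAt.mp hf).comp_hasDerivAt t hγ
  simpa [Function.comp_def] using this

theorem ConvexOn.add_inner_gradient_sub_le {f : H → ℝ} {s : Set H} {a b : H}
    (hf : ConvexOn ℝ s f) (ha : a ∈ s) (hb : b ∈ s) (hfa : DifferentiableAt ℝ f a) :
    f a + ⟪gradient f a, b - a⟫ ≤ f b := by
  simpa using hf.add_fderiv_sub_le ha hb hfa.hasGradientAt.hasFDerivAt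

theorem hasDerivAt_imdEnergy {s : ℝ} (hf : DifferentiableAt ℝ f (x s))
    (hW : DifferentiableAt ℝ W (ζ s)) (hζ : DifferentiableAt ℝ ζ s) (hx : DifferentiableAt ℝ x s)
    (hζ' : deriv ζ s = -gradient f (x s))
    (hmirror : s • deriv x s + x s = gradient W (ζ s)) :
    HasDerivAt (imdEnergy f W ζ x xstar)
      (f (x s) - f xstar + ⟪gradient f (x s), xstar - x s⟫) s := by
  have hfx := hf.hasGradientAt.comp_hasDerivAt hx.hasDerivAt
  have hWζ := hW.hasGradientAt.comp_hasDerivAt hζ.hasDerivAt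
  have hζx := hζ.hasDerivAt.inner ℝ (hasDerivAt_const s xstar)
  refine (((hasDerivAt_id s).mul (hfx.sub_const (f xstar))).add (hWζ.sub hζx)).congr_deriv ?_
  rw [← hmirror, hζ']
  simp only [id, inner_add_left, inner_smul_left, inner_neg_right, inner_neg_left, inner_sub_right,
    inner_zero_right, RCLike.conj_to_real, real_inner_comm (x s),
    real_inner_comm (gradient f (x s)) (deriv x s)]
  ring

theorem imdEnergy_antitoneOn (hf_conv : ConvexOn ℝ univ f) (hf : Differentiable ℝ f)
    (hW : Differentiable ℝ W) (hζ : Differentiable ℝ ζ) (hx : Differentiable ℝ x)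
    (hζ' : ∀ t ≥ (0 : ℝ), deriv ζ t = -gradient f (x t))
    (hmirror : ∀ t ≥ (0 : ℝ), t • deriv x t + x t = gradient W (ζ t)) :
    AntitoneOn (imdEnergy f W ζ x xstar) (Ici 0) := by
  have hE (t : ℝ) (ht : 0 ≤ t) := hasDerivAt_imdEnergy (xstar := xstar) (hf (x t)) (hW (ζ t)) (hζ t)
    (hx t) (hζ' t ht) (hmirror t ht)
  refine antitoneOn_of_hasDerivWithinAt_nonpos (convex_Ici 0) ?_
    (fun t ht => (hE t (interior_subset ht)).hasDerivWithinAt) fun t _ => ?_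
  · exact fun t ht => (hE t ht).continuousAt.continuousWithinAt
  · linarith [hf_conv.add_inner_gradient_sub_le (mem_univ _) (mem_univ xstar) (hf (x t))]

end

theorem imd_error_bound_mu_eq_t_general
    {H : Type*} [NormedAddCommGroup H] [InnerProductSpace ℝ H]
    [FiniteDimensional ℝ H]
    (f W : H → ℝ) (ζ x : ℝ → H) (xstar : H)
    (hf_conv : ConvexOn ℝ Set.univ f)
    (hf_diff : Differentiable ℝ f)
    (hW_diff : Differentiable ℝ W)
    (hW0 : W 0 = 0)
    (hV_fin : BddAbove (Set.range fun z => ⟪z, xstar⟫ - W z))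
    (hζ_diff : Differentiable ℝ ζ) (hx_diff : Differentiable ℝ x)
    (hζ0 : ζ 0 = 0)
    (hζ' : ∀ t ≥ (0 : ℝ), deriv ζ t = -gradient f (x t))
    (hmirror : ∀ t ≥ (0 : ℝ), t • deriv x t + x t = gradient W (ζ t)) :
    ∀ t > (0 : ℝ),
      f (x t) - f xstar ≤ (⨆ z : H, (⟪z, xstar⟫ - W z)) * t⁻¹ := by
  intro t ht
  have hE : imdEnergy f W ζ x xstar t ≤ 0 := by
    rw [← imdEnergy_zero hW0 hζ0]
    exact imdEnergy_antitoneOn hf_conv hf_diff hW_diff hζ_diff hx_diff hζ' hmirror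
      self_mem_Ici ht.le ht.le
  have hV : ⟪ζ t, xstar⟫ - W (ζ t) ≤ ⨆ z : H, (⟪z, xstar⟫ - W z) := le_ciSup hV_fin (ζ t)
  rw [← div_eq_mul_inv, le_div_iff₀ ht]
  unfold imdEnergy at hE
  linarith

/-- Along any solution of the continuous inertial mirror descent system with
`μ(t) = t` (i.e. `ζ'(t) = −∇f(x(t))`, `ζ(0) = 0`, `t·x'(t) + x(t) = ∇W(ζ(t))` for
all `t ≥ 0`, `x(0) = ∇W(0)`), one has for every `t > 0` the upper bound
`f(x(t)) − f* ≤ V(x*)·t⁻¹`, where `V(x*) = sup_ζ (⟨ζ, x*⟩ − W(ζ))`. -/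
theorem imd_error_bound_mu_eq_t
    {H : Type*} [NormedAddCommGroup H] [InnerProductSpace ℝ H]
    [FiniteDimensional ℝ H]
    (f W : H → ℝ) (ζ x : ℝ → H) (xstar : H)
    (hf_conv : ConvexOn ℝ Set.univ f)
    (hf_diff : Differentiable ℝ f)
    (hmin : ∀ y, f xstar ≤ f y)
    (hW_conv : ConvexOn ℝ Set.univ W)
    (hW_diff : Differentiable ℝ W)
    (hW_grad_cont : Continuous (gradient W))
    (hW0 : W 0 = 0) (hWgrad0 : gradient W 0 = 0)
    (hV_fin : BddAbove (Set.range fun z => ⟪z, xstar⟫ - W z))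
    (hζ_diff : Differentiable ℝ ζ) (hx_diff : Differentiable ℝ x)
    (hζ0 : ζ 0 = 0) (hx0 : x 0 = gradient W 0)
    (hζ' : ∀ t ≥ (0 : ℝ), deriv ζ t = -gradient f (x t))
    (hmirror : ∀ t ≥ (0 : ℝ), t • deriv x t + x t = gradient W (ζ t))
    (hfx_cont : Continuous (fun s => f (x s)))
    (hfx_diff : Differentiable ℝ (fun s => f (x s))) :
    ∀ t > (0 : ℝ),
      f (x t) - f xstar ≤ (⨆ z : H, (⟪z, xstar⟫ - W z)) * t⁻¹ :=
  imd_error_bound_mu_eq_t_general f W ζ x xstar hf_conv hf_diff hW_diff hW0 hV_fin hζ_diff hx_diff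
    hζ0 hζ' hmirror
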